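/- Suppose (λ, u) satisfies the fixed point equation u = λL_λ⁻¹N(u) in Z (with α, β, k > 0, λ > 0, λk ≠ 1), where ‖L_λ⁻¹‖_{Z→Y} ≤ λ/|λ²k²−1| and ‖N(u)‖_Z ≤ 1. Then ‖u‖_Y ≤ λ²/|λ²k²−1|, and combined with the energy identity λ|∫₀^{2π}sin(s+u(s))ds|/(2π) ≤ (βk²+α)(1/2π)∫₀^{2π}u'(s)²ds and Wirtinger's inequality, one gets |(1/2π)∫₀^{2π}sin(s+u(s))ds| ≤ (βk²+α)λ³/(λ²k²−1)². In particular (1/2π)∫₀^{2π}sin(s+u(s))ds → 0 as λ → +∞ along solutions. -/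

import Mathlib

/-!
Multiplying the equation by `u''` and integrating over a period, every term is an exact
derivative except `(λk² − λ⁻¹)∫u''²` and `−λ∫sin(z + u)u''`; completing the square against
`sin² ≤ 1` gives `(λk² − λ⁻¹)²∫u''² ≤ 2πλ²`, i.e. `∫u''² ≤ 2πλ⁴/(λ²k² − 1)²`. Multiplying by `u'`
instead gives the energy identity `λ∫sin(z + u) = βk²∫u''² + α∫u'²`, so the mean of `sin(z + u)`
is nonnegative. Since `u'` is periodic with mean zero, Wirtinger's inequality `∫u'² ≤ ∫u''²`
(Parseval plus `ĝ'(n) = in ĝ(n)`) turns these into both bounds.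
-/

open Real MeasureTheory intervalIntegral

theorem memLp_two_restrict_Ioc_of_continuousOn {a b : ℝ} {g : ℝ → ℂ}
    (hg : ContinuousOn g (Set.Icc a b)) : MemLp g 2 (volume.restrict (Set.Ioc a b)) :=
  ((memLp_two_iff_integrable_sq_norm (hg.aestronglyMeasurable measurableSet_Icc)).2
    (hg.norm.pow 2).integrableOn_Icc).mono_measure
    (Measure.restrict_mono Set.Ioc_subset_Icc_self le_rfl)

theorem norm_fourierCoeffOn_le_of_hasDerivAt {a b : ℝ} (hab : a < b) {g g' : ℝ → ℂ}
    (hg : ∀ x ∈ Set.uIcc a b, HasDerivAt g (g' x) x) (hg' : IntervalIntegrable g' volume a b)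
    (hgab : g b = g a) {n : ℤ} (hn : n ≠ 0) :
    ‖fourierCoeffOn hab g n‖ ≤ (b - a) / (2 * π) * ‖fourierCoeffOn hab g' n‖ := by
  rw [fourierCoeffOn_of_hasDerivAt hab hn hg hg', hgab, sub_self, mul_zero, zero_sub,
    ← Complex.ofReal_sub]
  have hn' : (1 : ℝ) ≤ |(n : ℝ)| := by exact_mod_cast Int.one_le_abs hn
  have hba : 0 < b - a := sub_pos.2 hab
  simp only [norm_mul, norm_div, norm_neg, norm_one, Complex.norm_real, Complex.norm_I,
    Complex.norm_intCast, Complex.norm_ofNat, Real.norm_eq_abs, abs_of_pos pi_pos,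
    abs_of_pos hba]
  calc 1 / (2 * π * 1 * |(n : ℝ)|) * ((b - a) * ‖fourierCoeffOn hab g' n‖)
      = (b - a) / (2 * π) * ‖fourierCoeffOn hab g' n‖ / |(n : ℝ)| := by ring
    _ ≤ (b - a) / (2 * π) * ‖fourierCoeffOn hab g' n‖ :=
      div_le_self (by positivity) hn'

theorem integral_sq_le_of_integral_eq_zero {a b : ℝ} (hab : a < b) {f f' : ℝ → ℝ}
    (hf : ∀ x ∈ Set.uIcc a b, HasDerivAt f (f' x) x) (hf' : ContinuousOn f' (Set.uIcc a b))
    (hfab : f b = f a) (hmean : ∫ x in a..b, f x = 0) :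
    ∫ x in a..b, f x ^ 2 ≤ ((b - a) / (2 * π)) ^ 2 * ∫ x in a..b, f' x ^ 2 := by
  set g : ℝ → ℂ := fun x ↦ f x
  set g' : ℝ → ℂ := fun x ↦ f' x
  have hg : ∀ x ∈ Set.uIcc a b, HasDerivAt g (g' x) x := fun x hx ↦ (hf x hx).ofReal_comp
  have hg' : ContinuousOn g' (Set.uIcc a b) := Complex.continuous_ofReal.comp_continuousOn hf'
  have hgc : ContinuousOn g (Set.uIcc a b) := fun x hx ↦ (hg x hx).continuousAt.continuousWithinAt
  rw [Set.uIcc_of_le hab.le] at hg' hgc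
  have hcoeff : ∀ n, ‖fourierCoeffOn hab g n‖ ^ 2
      ≤ ((b - a) / (2 * π)) ^ 2 * ‖fourierCoeffOn hab g' n‖ ^ 2 := by
    intro n
    rcases eq_or_ne n 0 with rfl | hn
    · have hc₀ : fourierCoeffOn hab g 0 = 0 := by
        simp [fourierCoeffOn_eq_integral, g, intervalIntegral.integral_ofReal, hmean]
      rw [hc₀, norm_zero, zero_pow two_ne_zero]
      positivity
    · rw [← mul_pow]
      exact pow_le_pow_left₀ (norm_nonneg _) (norm_fourierCoeffOn_le_of_hasDerivAt hab hg
        (hg'.intervalIntegrable_of_Icc hab.le) (by simp [g, hfab]) hn) 2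
  have hparseval := hasSum_sq_fourierCoeffOn hab (memLp_two_restrict_Ioc_of_continuousOn hgc)
  have hparseval' := hasSum_sq_fourierCoeffOn hab (memLp_two_restrict_Ioc_of_continuousOn hg')
  have hle := hasSum_le hcoeff hparseval (hparseval'.mul_left _)
  simp only [g, g', Complex.norm_real, Real.norm_eq_abs, sq_abs, smul_eq_mul] at hle
  rw [mul_left_comm] at hle
  exact le_of_mul_le_mul_left hle (inv_pos.2 (sub_pos.2 hab))

section

variable {𝕜 F : Type*} [NontriviallyNormedField 𝕜] [NormedAddCommGroup F] [NormedSpace 𝕜 F]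
  {f : 𝕜 → F}

theorem Function.Periodic.deriv {c : 𝕜} (hf : Function.Periodic f c) :
    Function.Periodic (deriv f) c := fun x ↦ by
  rw [← deriv_comp_add_const, show (fun y ↦ f (y + c)) = f from funext hf]

theorem Function.Periodic.iteratedDeriv {c : 𝕜} (hf : Function.Periodic f c) (n : ℕ) :
    Function.Periodic (iteratedDeriv n f) c := by
  induction n with
  | zero => simpa
  | succ n ih => rw [iteratedDeriv_succ]; exact ih.deriv

theorem ContDiff.hasDerivAt_iteratedDeriv {n m : ℕ} (hf : ContDiff 𝕜 n f) (hm : m < n) (x : 𝕜) :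
    HasDerivAt (iteratedDeriv m f) (iteratedDeriv (m + 1) f x) x := by
  rw [iteratedDeriv_succ]
  exact (hf.differentiable_iteratedDeriv m (by exact_mod_cast hm) x).hasDerivAt

theorem ContDiff.hasDerivAt_deriv {n : ℕ} (hf : ContDiff 𝕜 n f) (hn : 1 < n) (x : 𝕜) :
    HasDerivAt (deriv f) (iteratedDeriv 2 f x) x := by
  simpa using hf.hasDerivAt_iteratedDeriv hn x

end

theorem integral_deriv_sq_le_of_periodic {u : ℝ → ℝ} {T : ℝ} (hT : 0 < T)
    (hu : ContDiff ℝ 2 u) (hper : Function.Periodic u T) :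
    ∫ x in (0:ℝ)..T, deriv u x ^ 2
      ≤ (T / (2 * π)) ^ 2 * ∫ x in (0:ℝ)..T, iteratedDeriv 2 u x ^ 2 := by
  have hd₀ : ∀ x, HasDerivAt u (deriv u x) x := fun x ↦
    (hu.differentiable (by norm_num) x).hasDerivAt
  have hmean : ∫ x in (0:ℝ)..T, deriv u x = 0 := by
    rw [intervalIntegral.integral_eq_sub_of_hasDerivAt (fun x _ ↦ hd₀ x)
      ((hu.continuous_deriv (by norm_num)).intervalIntegrable _ _), sub_eq_zero]
    simpa using hper 0
  simpa using integral_sq_le_of_integral_eq_zero hT (fun x _ ↦ hu.hasDerivAt_deriv (by norm_num) x)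
    (hu.continuous_iteratedDeriv 2 le_rfl).continuousOn (by simpa using hper.deriv 0) hmean

/-- The equation `L_λ u = λ N(u)`, written pointwise. -/
def IsFluxonSolution (α β k lam : ℝ) (u : ℝ → ℝ) : Prop :=
  ∀ z, β * k^2 * iteratedDeriv 3 u z + (lam * k^2 - lam⁻¹) * iteratedDeriv 2 u z
    - α * deriv u z - lam * Real.sin (z + u z)
    + (lam / (2*π)) * ∫ s in (0:ℝ)..(2*π), Real.sin (s + u s) = 0

namespace IsFluxonSolution

variable {α β k lam : ℝ} {u : ℝ → ℝ}

theorem sq_mul_integral_iteratedDeriv_two_sq_le (hsol : IsFluxonSolution α β k lam u)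
    (hu : ContDiff ℝ 3 u) (hper : Function.Periodic u (2 * π)) :
    (lam * k ^ 2 - lam⁻¹) ^ 2 * ∫ z in (0:ℝ)..(2*π), iteratedDeriv 2 u z ^ 2 ≤ 2 * π * lam ^ 2 := by
  set c := lam * k ^ 2 - lam⁻¹
  set m := lam / (2 * π) * ∫ s in (0:ℝ)..(2*π), Real.sin (s + u s)
  set u₁ := deriv u
  set u₂ := iteratedDeriv 2 u
  set u₃ := iteratedDeriv 3 u
  have hd₁ : ∀ x, HasDerivAt u₁ (u₂ x) x := hu.hasDerivAt_deriv (by norm_num)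
  have hd₂ : ∀ x, HasDerivAt u₂ (u₃ x) x := hu.hasDerivAt_iteratedDeriv (by norm_num)
  let G : ℝ → ℝ := fun x ↦
    lam ^ 2 * x - 2 * c * (β * k ^ 2 * u₂ x ^ 2 / 2 - α * u₁ x ^ 2 / 2 + m * u₁ x)
  let G' : ℝ → ℝ := fun x ↦ lam ^ 2 - 2 * c * (β * k ^ 2 * u₂ x * u₃ x - α * u₁ x * u₂ x + m * u₂ x)
  have hG : ∀ x, HasDerivAt G (G' x) x := fun x ↦ by
    refine (((hasDerivAt_id x).const_mul (lam ^ 2)).sub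
      (((((hd₂ x).pow 2).const_mul (β * k ^ 2)).div_const 2 |>.sub
        ((((hd₁ x).pow 2).const_mul α).div_const 2)).add ((hd₁ x).const_mul m) |>.const_mul (2 * c))
      ).congr_deriv ?_
    simp only [G']
    ring
  have hc₁ : Continuous u₁ := hu.continuous_deriv (by norm_num)
  have hc₂ : Continuous u₂ := hu.continuous_iteratedDeriv 2 (by norm_num)
  have hc₃ : Continuous u₃ := hu.continuous_iteratedDeriv 3 (by norm_num)
  have hG'c : Continuous G' := by fun_prop
  have hode : ∀ x, β * k ^ 2 * u₃ x + c * u₂ x - α * u₁ x - lam * sin (x + u x) + m = 0 := hsol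
  have hpt : ∀ x, c ^ 2 * u₂ x ^ 2 ≤ G' x := fun x ↦ by
    calc c ^ 2 * u₂ x ^ 2
        ≤ c ^ 2 * u₂ x ^ 2 + (c * u₂ x - lam * sin (x + u x)) ^ 2
          + lam ^ 2 * (1 - sin (x + u x) ^ 2) := by
          nlinarith [sq_nonneg (c * u₂ x - lam * sin (x + u x)), sin_sq_le_one (x + u x)]
      _ = G' x := by linear_combination (2 * c * u₂ x) * hode x
  have hGper : G (2 * π) - G 0 = 2 * π * lam ^ 2 := by
    have h₁ : u₁ (2 * π) = u₁ 0 := by simpa using hper.deriv 0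
    have h₂ : u₂ (2 * π) = u₂ 0 := by simpa using hper.iteratedDeriv 2 0
    simp only [G, h₁, h₂]
    ring
  rw [← intervalIntegral.integral_const_mul, ← hGper,
    ← intervalIntegral.integral_eq_sub_of_hasDerivAt (fun x _ ↦ hG x) (hG'c.intervalIntegrable _ _)]
  exact intervalIntegral.integral_mono_on two_pi_pos.le
    (Continuous.intervalIntegrable (by fun_prop) _ _) (hG'c.intervalIntegrable _ _) fun x _ ↦ hpt x

theorem energy_identity (hsol : IsFluxonSolution α β k lam u) (hu : ContDiff ℝ 3 u)
    (hper : Function.Periodic u (2 * π)) :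
    lam * ∫ z in (0:ℝ)..(2*π), sin (z + u z)
      = β * k ^ 2 * (∫ z in (0:ℝ)..(2*π), iteratedDeriv 2 u z ^ 2)
        + α * ∫ z in (0:ℝ)..(2*π), deriv u z ^ 2 := by
  set c := lam * k ^ 2 - lam⁻¹
  set m := lam / (2 * π) * ∫ s in (0:ℝ)..(2*π), Real.sin (s + u s)
  set u₁ := deriv u
  set u₂ := iteratedDeriv 2 u
  set u₃ := iteratedDeriv 3 u
  have hd₀ : ∀ x, HasDerivAt u (u₁ x) x := fun x ↦
    (hu.differentiable (by norm_num) x).hasDerivAt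
  have hd₁ : ∀ x, HasDerivAt u₁ (u₂ x) x := hu.hasDerivAt_deriv (by norm_num)
  have hd₂ : ∀ x, HasDerivAt u₂ (u₃ x) x := hu.hasDerivAt_iteratedDeriv (by norm_num)
  have hode : ∀ x, β * k ^ 2 * u₃ x + c * u₂ x - α * u₁ x - lam * sin (x + u x) + m = 0 := hsol
  let F : ℝ → ℝ := fun x ↦
    β * k ^ 2 * (u₁ x * u₂ x) + c * u₁ x ^ 2 / 2 + lam * cos (x + u x) + m * u x
  have hF : ∀ x, HasDerivAt F (β * k ^ 2 * u₂ x ^ 2 + α * u₁ x ^ 2 - lam * sin (x + u x)) x :=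
    fun x ↦ by
      refine (((((hd₁ x).mul (hd₂ x)).const_mul (β * k ^ 2)).add
        ((((hd₁ x).pow 2).const_mul c).div_const 2)).add
        ((((hasDerivAt_id' x).add (hd₀ x)).cos).const_mul lam) |>.add
        ((hd₀ x).const_mul m)).congr_deriv ?_
      linear_combination (u₁ x) * hode x
  have hFper : F (2 * π) = F 0 := by
    have h₀ : u (2 * π) = u 0 := by simpa using hper 0
    have h₁ : u₁ (2 * π) = u₁ 0 := by simpa using hper.deriv 0
    have h₂ : u₂ (2 * π) = u₂ 0 := by simpa using hper.iteratedDeriv 2 0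
    simp only [F, h₀, h₁, h₂, add_comm (2 * π), cos_add_two_pi, zero_add]
  have hc₀ : Continuous u := hu.continuous
  have hc₁ : Continuous u₁ := hu.continuous_deriv (by norm_num)
  have hc₂ : Continuous u₂ := hu.continuous_iteratedDeriv 2 (by norm_num)
  have hH : Continuous fun x ↦ β * k ^ 2 * u₂ x ^ 2 + α * u₁ x ^ 2 - lam * sin (x + u x) := by
    fun_prop
  have hsplit : ∫ x in (0:ℝ)..(2*π), (β * k ^ 2 * u₂ x ^ 2 + α * u₁ x ^ 2 - lam * sin (x + u x))
      = β * k ^ 2 * (∫ x in (0:ℝ)..(2*π), u₂ x ^ 2) + α * (∫ x in (0:ℝ)..(2*π), u₁ x ^ 2)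
        - lam * ∫ x in (0:ℝ)..(2*π), sin (x + u x) := by
    rw [intervalIntegral.integral_sub, intervalIntegral.integral_add,
      intervalIntegral.integral_const_mul, intervalIntegral.integral_const_mul,
      intervalIntegral.integral_const_mul]
    all_goals exact Continuous.intervalIntegrable (by fun_prop) _ _
  rw [intervalIntegral.integral_eq_sub_of_hasDerivAt (fun x _ ↦ hF x) (hH.intervalIntegrable _ _),
    hFper, sub_self] at hsplit
  linarith

theorem integral_iteratedDeriv_two_sq_le (hsol : IsFluxonSolution α β k lam u)
    (hu : ContDiff ℝ 3 u) (hper : Function.Periodic u (2 * π)) (hlam : 0 < lam)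
    (hne : lam ^ 2 * k ^ 2 ≠ 1) :
    ∫ z in (0:ℝ)..(2*π), iteratedDeriv 2 u z ^ 2 ≤ 2 * π * lam ^ 4 / (lam ^ 2 * k ^ 2 - 1) ^ 2 := by
  have hM : 0 < (lam ^ 2 * k ^ 2 - 1) ^ 2 := pow_two_pos_of_ne_zero (sub_ne_zero.2 hne)
  have hc : lam ^ 2 * k ^ 2 - 1 = lam * (lam * k ^ 2 - lam⁻¹) := by field_simp
  rw [le_div_iff₀ hM, hc, mul_pow, mul_comm, mul_assoc]
  calc lam ^ 2 * ((lam * k ^ 2 - lam⁻¹) ^ 2 * ∫ z in (0:ℝ)..(2*π), iteratedDeriv 2 u z ^ 2)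
      ≤ lam ^ 2 * (2 * π * lam ^ 2) :=
        mul_le_mul_of_nonneg_left (hsol.sq_mul_integral_iteratedDeriv_two_sq_le hu hper)
          (sq_nonneg _)
    _ = 2 * π * lam ^ 4 := by ring

end IsFluxonSolution

theorem solution_branch_bounds_general
    (α β k lam : ℝ) (hα : 0 < α) (hβ : 0 < β) (hlam : 0 < lam)
    (hne : lam^2 * k^2 ≠ 1)
    (u : ℝ → ℝ) (hu : ContDiff ℝ 3 u)
    (hper : ∀ z, u (z + 2*π) = u z)
    (hODE : ∀ z, β * k^2 * iteratedDeriv 3 u z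
        + (lam * k^2 - lam⁻¹) * iteratedDeriv 2 u z
        - α * deriv u z - lam * Real.sin (z + u z)
        + (lam / (2*π)) * ∫ s in (0:ℝ)..(2*π), Real.sin (s + u s) = 0) :
    Real.sqrt ((1 / (2*π)) * ∫ s in (0:ℝ)..(2*π), (deriv u s)^2)
        ≤ lam^2 / |lam^2 * k^2 - 1|
    ∧ |(1 / (2*π)) * ∫ s in (0:ℝ)..(2*π), Real.sin (s + u s)|
        ≤ (β * k^2 + α) * lam^3 / (lam^2 * k^2 - 1)^2 := by
  have hsol : IsFluxonSolution α β k lam u := hODE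
  have hA := hsol.integral_iteratedDeriv_two_sq_le hu hper hlam hne
  have hBA := integral_deriv_sq_le_of_periodic two_pi_pos (hu.of_le (by norm_num)) hper
  rw [div_self two_pi_pos.ne', one_pow, one_mul] at hBA
  have hE := hsol.energy_identity hu hper
  set A := ∫ z in (0:ℝ)..(2*π), iteratedDeriv 2 u z ^ 2
  set B := ∫ z in (0:ℝ)..(2*π), deriv u z ^ 2
  set S := ∫ z in (0:ℝ)..(2*π), Real.sin (z + u z)
  have hA₀ : 0 ≤ A := intervalIntegral.integral_nonneg two_pi_pos.le fun _ _ ↦ sq_nonneg _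
  have hB₀ : 0 ≤ B := intervalIntegral.integral_nonneg two_pi_pos.le fun _ _ ↦ sq_nonneg _
  have hM : 0 < (lam ^ 2 * k ^ 2 - 1) ^ 2 := pow_two_pos_of_ne_zero (sub_ne_zero.2 hne)
  constructor
  · refine Real.sqrt_le_iff.2 ⟨by positivity, ?_⟩
    calc 1 / (2 * π) * B ≤ 1 / (2 * π) * A := by gcongr
      _ ≤ 1 / (2 * π) * (2 * π * lam ^ 4 / (lam ^ 2 * k ^ 2 - 1) ^ 2) := by gcongr
      _ = (lam ^ 2 / |lam ^ 2 * k ^ 2 - 1|) ^ 2 := by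
        rw [div_pow, sq_abs]; field_simp
  · have hS : 0 ≤ S := le_of_mul_le_mul_left (by rw [mul_zero, hE]; positivity) hlam
    rw [abs_of_nonneg (by positivity)]
    calc 1 / (2 * π) * S = (β * k ^ 2 * A + α * B) / (2 * π * lam) := by
          rw [← hE]; field_simp
      _ ≤ (β * k ^ 2 + α) * A / (2 * π * lam) := by
          rw [add_mul]; gcongr
      _ ≤ (β * k ^ 2 + α) * (2 * π * lam ^ 4 / (lam ^ 2 * k ^ 2 - 1) ^ 2) / (2 * π * lam) := by
          gcongr
      _ = (β * k ^ 2 + α) * lam ^ 3 / (lam ^ 2 * k ^ 2 - 1) ^ 2 := by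
          field_simp

/-- Bounds along the solution branch: a `C³` `2π`-periodic mean-zero solution of
the rescaled fluxon equation satisfies `‖u‖_Y ≤ λ²/|λ²k²−1|` and
`|(1/2π)∫₀^{2π} sin(s+u(s)) ds| ≤ (βk²+α)λ³/(λ²k²−1)²`; in particular the mean
of `sin(s+u(s))` tends to `0` as `λ → +∞` along solutions. -/
theorem solution_branch_bounds
    (α β k lam : ℝ) (hα : 0 < α) (hβ : 0 < β) (hk : 0 < k) (hlam : 0 < lam)
    (hne : lam^2 * k^2 ≠ 1)
    (u : ℝ → ℝ) (hu : ContDiff ℝ 3 u)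
    (hper : ∀ z, u (z + 2*π) = u z)
    (hmean : ∫ s in (0:ℝ)..(2*π), u s = 0)
    (hODE : ∀ z, β * k^2 * iteratedDeriv 3 u z
        + (lam * k^2 - lam⁻¹) * iteratedDeriv 2 u z
        - α * deriv u z - lam * Real.sin (z + u z)
        + (lam / (2*π)) * ∫ s in (0:ℝ)..(2*π), Real.sin (s + u s) = 0) :
    Real.sqrt ((1 / (2*π)) * ∫ s in (0:ℝ)..(2*π), (deriv u s)^2)
        ≤ lam^2 / |lam^2 * k^2 - 1|
    ∧ |(1 / (2*π)) * ∫ s in (0:ℝ)..(2*π), Real.sin (s + u s)|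
        ≤ (β * k^2 + α) * lam^3 / (lam^2 * k^2 - 1)^2 :=
  solution_branch_bounds_general α β k lam hα hβ hlam hne u hu hper hODE
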